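/- arXiv:1701.06851 — 4 statements merged into one kernel-verified Lean document; each statement's English description precedes it below -/
import Mathlib

section
/- Let g, d, r be non-negative integers, k = r+1, k̄ = g−d+r ≥ 1, and ρ = g − k·k̄ ≥ 0. Suppose for i = 1,…,g we have vanishing sequences u_0(i) > ⋯ > u_r(i) ≥ 0 of integers with initial values u_s(0) = d − s and final values u_s(g) ≥ r − s, and for each i either (generic step) u_s(i) = u_s(i−1) − 1 for all s, or (special step) there exists t(i) with u_{t(i)}(i) = u_{t(i)}(i−1) and u_s(i) = u_s(i−1) − 1 for s ≠ t(i). If α denotes the number of generic steps, then α ≤ ρ. -/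
/-! Sum the entries of the vanishing sequence. A generic step lowers this sum by `r + 1` and a
special step by `r`, so after `g` steps it equals `(r + 1) d - ∑ s - r g - α`. Comparing with
the lower bound `(r + 1) r - ∑ s` coming from `u_s(g) ≥ r - s` gives
`α ≤ (r + 1) d - r g - (r + 1) r = ρ`. -/

open Finset

lemma sum_eq_sum_sub_card_of_forall_eq_sub_one {ι : Type*} {A : Finset ι} {a b : ι → ℤ}
    (h : ∀ s ∈ A, b s = a s - 1) : ∑ s ∈ A, b s = ∑ s ∈ A, a s - #A := by
  rw [sum_congr rfl h, sum_sub_distrib, sum_const, nsmul_one]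

lemma sum_eq_sum_sub_card_add_one_of_eq_sub_one_off {ι : Type*} [DecidableEq ι]
    {A : Finset ι} {a b : ι → ℤ} {t : ι} (ht : t ∈ A) (hbt : b t = a t)
    (h : ∀ s ∈ A, s ≠ t → b s = a s - 1) : ∑ s ∈ A, b s = ∑ s ∈ A, a s - #A + 1 := by
  have herase : ∑ s ∈ A.erase t, b s = ∑ s ∈ A.erase t, a s - #(A.erase t) :=
    sum_eq_sum_sub_card_of_forall_eq_sub_one fun s hs =>
      h s (mem_of_mem_erase hs) (ne_of_mem_erase hs)
  rw [← add_sum_erase A b ht, ← add_sum_erase A a ht, herase, hbt, card_erase_of_mem ht,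
    Nat.cast_sub (card_pos.mpr ⟨t, ht⟩)]
  push_cast
  ring

lemma sum_range_succ_step {r t : ℕ} {gen : Bool} {a b : ℕ → ℤ}
    (h : (gen = true → ∀ s ≤ r, b s = a s - 1) ∧
      (gen = false → t ≤ r ∧ b t = a t ∧ ∀ s ≤ r, s ≠ t → b s = a s - 1)) :
    ∑ s ∈ range (r + 1), b s = ∑ s ∈ range (r + 1), a s - r - if gen then 1 else 0 := by
  cases gen with
  | true =>
    rw [sum_eq_sum_sub_card_of_forall_eq_sub_one fun s hs => h.1 rfl s (mem_range_succ_iff.mp hs)]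
    simp only [card_range, if_true]
    push_cast
    ring
  | false =>
    obtain ⟨ht, hbt, hoff⟩ := h.2 rfl
    rw [sum_eq_sum_sub_card_add_one_of_eq_sub_one_off (mem_range_succ_iff.mpr ht) hbt
      fun s hs => hoff s (mem_range_succ_iff.mp hs)]
    simp only [card_range, Bool.false_eq_true, if_false]
    push_cast
    ring

lemma eq_sub_mul_sub_card_filter_of_step {f : ℕ → ℤ} {c : ℤ} {p : ℕ → Prop}
    [DecidablePred p] {n : ℕ} (h : ∀ i ∈ Icc 1 n, f i = f (i - 1) - c - if p i then 1 else 0) :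
    f n = f 0 - c * n - #{i ∈ Icc 1 n | p i} := by
  induction n with
  | zero => simp
  | succ n ih =>
    have hprev := ih fun i hi => h i (Icc_subset_Icc_right n.le_succ hi)
    have hcard : (#{i ∈ Icc 1 (n + 1) | p i} : ℤ) =
        #{i ∈ Icc 1 n | p i} + if p (n + 1) then 1 else 0 := by
      rw [← insert_Icc_right_eq_Icc_add_one (by omega : 1 ≤ n + 1), filter_insert]
      split_ifs
      · rw [card_insert_of_notMem (by simp)]
        push_cast
        rfl
      · simp
    rw [h (n + 1) (by simp), Nat.add_sub_cancel, hprev, hcard]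
    push_cast
    ring

theorem generic_steps_le_rho_general (g d r : ℕ)
    (u : ℕ → ℕ → ℤ)
    (hinit : ∀ s ≤ r, u 0 s = (d : ℤ) - s)
    (hfinal : ∀ s ≤ r, (r : ℤ) - s ≤ u g s)
    (gen : ℕ → Bool) (t : ℕ → ℕ)
    (hstep : ∀ i, 1 ≤ i → i ≤ g →
      (gen i = true → ∀ s ≤ r, u i s = u (i - 1) s - 1) ∧
      (gen i = false → t i ≤ r ∧ u i (t i) = u (i - 1) (t i) ∧
        ∀ s ≤ r, s ≠ t i → u i s = u (i - 1) s - 1)) :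
    ((((Finset.Icc 1 g).filter fun i => gen i = true).card : ℤ))
      ≤ (g : ℤ) - (r + 1) * ((g : ℤ) - d + r) := by
  set S : ℕ → ℤ := fun i => ∑ s ∈ range (r + 1), u i s
  have hS_telescope : S g = S 0 - r * g - #{i ∈ Icc 1 g | gen i = true} :=
    eq_sub_mul_sub_card_filter_of_step fun i hi =>
      sum_range_succ_step (hstep i (mem_Icc.mp hi).1 (mem_Icc.mp hi).2)
  have hS_init : S 0 = ∑ s ∈ range (r + 1), ((d : ℤ) - s) :=
    sum_congr rfl fun s hs => hinit s (mem_range_succ_iff.mp hs)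
  have hS_final : ∑ s ∈ range (r + 1), ((r : ℤ) - s) ≤ S g :=
    sum_le_sum fun s hs => hfinal s (mem_range_succ_iff.mp hs)
  simp only [sum_sub_distrib, sum_const, card_range, nsmul_eq_mul] at hS_init hS_final
  push_cast at hS_init hS_final
  linarith

/-- Combinatorial dimension bound for limit linear series on a chain of `g`
elliptic curves.  Given vanishing sequences `u_0(i) > ⋯ > u_r(i) ≥ 0` with
`u_s(0) = d - s` and `u_s(g) ≥ r - s`, where each step `i ∈ {1, …, g}` is
either generic (all entries drop by `1`) or special (entry `t(i)` is fixed and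
all other entries drop by `1`), the number `α` of generic steps satisfies
`α ≤ ρ = g - (r+1)(g-d+r)`. -/
theorem generic_steps_le_rho (g d r : ℕ)
    (hkbar : 1 ≤ (g : ℤ) - d + r)
    (hrho : 0 ≤ (g : ℤ) - (r + 1) * ((g : ℤ) - d + r))
    (u : ℕ → ℕ → ℤ)
    (hdec : ∀ i ≤ g, ∀ s < r, u i (s + 1) < u i s)
    (hnonneg : ∀ i ≤ g, 0 ≤ u i r)
    (hinit : ∀ s ≤ r, u 0 s = (d : ℤ) - s)
    (hfinal : ∀ s ≤ r, (r : ℤ) - s ≤ u g s)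
    (gen : ℕ → Bool) (t : ℕ → ℕ)
    (hstep : ∀ i, 1 ≤ i → i ≤ g →
      (gen i = true → ∀ s ≤ r, u i s = u (i - 1) s - 1) ∧
      (gen i = false → t i ≤ r ∧ u i (t i) = u (i - 1) (t i) ∧
        ∀ s ≤ r, s ≠ t i → u i s = u (i - 1) s - 1)) :
    ((((Finset.Icc 1 g).filter fun i => gen i = true).card : ℤ))
      ≤ (g : ℤ) - (r + 1) * ((g : ℤ) - d + r) :=
  generic_steps_le_rho_general g d r u hinit hfinal gen t hstep
end

section
/- The assignment sending each valid sequence of special steps (t(i) for the g − ρ special indices i, placed so that an index i with special index t(i) is put in the first empty spot of column t(i)) produces a standard Young tableau of shape k × k̄ filled with k·k̄ distinct numbers from {1,…,g}: entries strictly increase down each column, and strictly increase left to right along each row. -/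
/-!
The entry placed at step `i` sits in row `β_{i,t(i)}` of column `t(i)`. Columns increase
because `β_{·,s}` is monotone in the step and grows by one at each step placed in column `s`.
For rows, the validity condition says that a step may enter column `s + 1` only while it is
strictly shorter than column `s`; by induction on the steps, every column is at most as long
as the one to its left at all times. So if `j < i` with `t i < t j`, then at time `j` column
`t j` is no longer than column `t i`, and step `i` lands strictly lower than step `j`.
-/

/-- `β_{i,s}`: the number of special steps `j ≤ i` with chosen column `t(j) = s`. -/
def specialCount (gen : ℕ → Bool) (t : ℕ → ℕ) (i s : ℕ) : ℕ :=
  ((Finset.Icc 1 i).filter fun j => gen j = false ∧ t j = s).card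

namespace specialCount

variable {gen : ℕ → Bool} {t : ℕ → ℕ}

lemma mono_left {i j : ℕ} (s : ℕ) (h : i ≤ j) :
    specialCount gen t i s ≤ specialCount gen t j s :=
  Finset.card_le_card (Finset.filter_subset_filter _ (Finset.Icc_subset_Icc_right h))

lemma succ_left (n s : ℕ) :
    specialCount gen t (n + 1) s =
      specialCount gen t n s + if gen (n + 1) = false ∧ t (n + 1) = s then 1 else 0 := by
  simp only [specialCount, Finset.card_filter]
  exact Finset.sum_Icc_succ_top (by omega) _

lemma self_eq_pred_add_one {i : ℕ} (hi : 1 ≤ i) (hgen : gen i = false) :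
    specialCount gen t i (t i) = specialCount gen t (i - 1) (t i) + 1 := by
  obtain ⟨n, rfl⟩ := Nat.exists_eq_add_of_le' hi
  rw [succ_left, if_pos ⟨hgen, rfl⟩, Nat.add_sub_cancel]

lemma lt_of_lt_of_column_eq {i j : ℕ} (hj : 1 ≤ j) (hgen : gen j = false)
    (hcol : t i = t j) (hij : i < j) :
    specialCount gen t i (t i) < specialCount gen t j (t j) := by
  have : specialCount gen t i (t i) ≤ specialCount gen t (j - 1) (t i) :=
    mono_left _ (Nat.le_sub_one_of_lt hij)
  rw [self_eq_pred_add_one hj hgen, ← hcol]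
  omega

variable {g : ℕ}
  (hcond : ∀ i, 1 ≤ i → i ≤ g → gen i = false → 0 < t i →
    specialCount gen t (i - 1) (t i) < specialCount gen t (i - 1) (t i - 1))
include hcond

lemma succ_column_le {m : ℕ} (hm : m ≤ g) (s : ℕ) :
    specialCount gen t m (s + 1) ≤ specialCount gen t m s := by
  induction m with
  | zero => simp [specialCount]
  | succ n ih =>
    have hprev := ih (by omega)
    have hmono : specialCount gen t n s ≤ specialCount gen t (n + 1) s := mono_left _ (by omega)
    rw [succ_left n (s + 1)]
    by_cases hstep : gen (n + 1) = false ∧ t (n + 1) = s + 1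
    · have hshorter := hcond (n + 1) (by omega) hm hstep.1 (by omega)
      rw [hstep.2, Nat.add_sub_cancel, Nat.add_sub_cancel] at hshorter
      rw [if_pos hstep]
      omega
    · rw [if_neg hstep]
      omega

lemma antitone_column {m : ℕ} (hm : m ≤ g) : Antitone (specialCount gen t m) :=
  antitone_nat_of_succ_le (succ_column_le hcond hm)

lemma lt_of_eq_of_column_lt {i j : ℕ} (hi : 1 ≤ i) (hgen : gen i = false) (hj : j ≤ g)
    (hrow : specialCount gen t i (t i) = specialCount gen t j (t j)) (hcol : t i < t j) :
    i < j := by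
  by_contra! hji
  have hji' : j < i := lt_of_le_of_ne hji (by rintro rfl; exact hcol.false)
  have hleft := antitone_column hcond hj hcol.le
  have hbefore : specialCount gen t j (t i) ≤ specialCount gen t (i - 1) (t i) :=
    mono_left _ (Nat.le_sub_one_of_lt hji')
  rw [self_eq_pred_add_one hi hgen] at hrow
  omega

end specialCount

open specialCount in
theorem produces_standard_young_tableau_general (g : ℕ)
    (gen : ℕ → Bool) (t : ℕ → ℕ)
    -- validity of the sequence of steps:
    (hcond : ∀ i, 1 ≤ i → i ≤ g → gen i = false → 0 < t i →
      specialCount gen t (i - 1) (t i) < specialCount gen t (i - 1) (t i - 1)) :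
    -- distinct positions
    (∀ i j, 1 ≤ i → i ≤ g → gen i = false → 1 ≤ j → j ≤ g → gen j = false →
      t i = t j → specialCount gen t i (t i) = specialCount gen t j (t j) → i = j) ∧
    -- entries strictly increase down each column
    (∀ i j, 1 ≤ i → i ≤ g → gen i = false → 1 ≤ j → j ≤ g → gen j = false →
      t i = t j → i < j →
      specialCount gen t i (t i) < specialCount gen t j (t j)) ∧
    -- entries strictly increase left to right along each row
    (∀ i j, 1 ≤ i → i ≤ g → gen i = false → 1 ≤ j → j ≤ g → gen j = false →
      specialCount gen t i (t i) = specialCount gen t j (t j) → t i < t j → i < j) := by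
  refine ⟨?_, fun i j _ _ _ hj _ hgj hcol hij => lt_of_lt_of_column_eq hj hgj hcol hij,
    fun i j hi _ hgi _ hjg _ hrow hcol => lt_of_eq_of_column_lt hcond hi hgi hjg hrow hcol⟩
  intro i j hi _ hgi hj _ hgj hcol hrow
  rcases lt_trichotomy i j with hij | rfl | hji
  · exact absurd hrow (lt_of_lt_of_column_eq hj hgj hcol hij).ne
  · rfl
  · exact absurd hrow (lt_of_lt_of_column_eq hi hgi hcol.symm hji).ne'

/-- Placing each special step `i` (i.e. `gen i = false`, `1 ≤ i ≤ g`) in the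
first empty spot of column `t(i)` — hence in row `β_{i,t(i)}` — of a tableau
with `k = r+1` columns and `k̄ = g - d + r` rows produces a standard Young
tableau of shape `k × k̄` filled with `k·k̄` distinct numbers from `{1, …, g}`:
the positions are distinct, entries strictly increase down each column, and
strictly increase left to right along each row. -/
theorem produces_standard_young_tableau (g d r : ℕ)
    (hkbar : 1 ≤ (g : ℤ) - d + r)
    (gen : ℕ → Bool) (t : ℕ → ℕ)
    -- validity of the sequence of steps:
    (hcol : ∀ i, 1 ≤ i → i ≤ g → gen i = false → t i ≤ r)
    (hcond : ∀ i, 1 ≤ i → i ≤ g → gen i = false → 0 < t i →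
      specialCount gen t (i - 1) (t i) < specialCount gen t (i - 1) (t i - 1))
    (hheight : ∀ s ≤ r, (specialCount gen t g s : ℤ) = (g : ℤ) - d + r) :
    -- distinct positions
    (∀ i j, 1 ≤ i → i ≤ g → gen i = false → 1 ≤ j → j ≤ g → gen j = false →
      t i = t j → specialCount gen t i (t i) = specialCount gen t j (t j) → i = j) ∧
    -- entries strictly increase down each column
    (∀ i j, 1 ≤ i → i ≤ g → gen i = false → 1 ≤ j → j ≤ g → gen j = false →
      t i = t j → i < j →
      specialCount gen t i (t i) < specialCount gen t j (t j)) ∧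
    -- entries strictly increase left to right along each row
    (∀ i j, 1 ≤ i → i ≤ g → gen i = false → 1 ≤ j → j ≤ g → gen j = false →
      specialCount gen t i (t i) = specialCount gen t j (t j) → t i < t j → i < j) :=
  produces_standard_young_tableau_general g gen t hcond
end

section
/- Let Γ be a single metric loop and P, Q two points on Γ such that the ratio of the lengths of the two arcs between P and Q is irrational (general position). Then for integers a ≠ b, the divisors aP + (d−a)Q and bP + (d−b)Q are not linearly equivalent on Γ. -/
/-!
A rational function `F` on the loop with divisor supported on `{P, Q}` is affine on each of the two
arcs, with integer slopes `s₁` on the arc of length `ℓ` and `s₂` on the arc of length `m`. Going once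
around the loop gives `s₁ ℓ + s₂ m = 0`, which forces `s₁ = s₂ = 0` when `ℓ / m` is irrational. The
coefficient of `P` in `div F` is the jump of slope `s₂ - s₁` there, so it vanishes, whereas the
difference of the two divisors has coefficient `a - b ≠ 0` at `P`.
-/

/-- `F` is affine with integer slope `mp` just to the right of `x` and with
integer slope `mm` just to the left of `x`. -/
def HasOneSidedSlopes (F : ℝ → ℝ) (x : ℝ) (mp mm : ℤ) : Prop :=
  (∀ᶠ y in nhdsWithin x (Set.Ioi x), F y = F x + mp * (y - x)) ∧
  (∀ᶠ y in nhdsWithin x (Set.Iio x), F y = F x + mm * (y - x))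

/-- `D` is the divisor of the continuous piecewise linear function `F` (with
integer slopes) on the metric loop of circumference `L`, realized as `ℝ`
modulo `L` with points represented in `[0, L)`: at each point, `D` records the
sum of the incoming slopes of `F`. -/
def IsPLDivisor (L : ℝ) (F : ℝ → ℝ) (D : ℝ →₀ ℤ) : Prop :=
  Continuous F ∧ Function.Periodic F L ∧
  (∀ p ∈ D.support, p ∈ Set.Ico 0 L) ∧
  ∀ x : ℝ, ∃ mp mm : ℤ, HasOneSidedSlopes F x mp mm ∧
    (x ∈ Set.Ico 0 L → D x = mm - mp)

/-- Two divisors on the metric loop of circumference `L` are linearly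
equivalent if they differ by the divisor of a piecewise linear function with
integer slopes. -/
def LoopEquiv (L : ℝ) (D D' : ℝ →₀ ℤ) : Prop :=
  ∃ F : ℝ → ℝ, IsPLDivisor L F (D - D')

/-- A divisor is effective if all its coefficients are nonnegative. -/
def EffectiveDiv (D : ℝ →₀ ℤ) : Prop := ∀ x, 0 ≤ D x

/-- The degree of a divisor. -/
def degDiv (D : ℝ →₀ ℤ) : ℤ := D.sum fun _ n => n

open Filter Set Topology

lemma Irrational.eq_zero_of_int_mul_add_int_mul_eq_zero {x y : ℝ} (h : Irrational (x / y))
    {s t : ℤ} (hst : (s : ℝ) * x + t * y = 0) : s = 0 ∧ t = 0 := by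
  have hy : y ≠ 0 := by
    rintro rfl
    exact h.ne_zero (div_zero x)
  have hs : s = 0 := by
    by_contra hs
    refine h ⟨-t / s, ?_⟩
    push_cast
    rw [div_eq_div_iff (by exact_mod_cast hs) hy]
    linarith
  subst hs
  have ht : (t : ℝ) * y = 0 := by linear_combination hst
  exact ⟨rfl, by exact_mod_cast (mul_eq_zero.1 ht).resolve_right hy⟩

lemma int_eq_of_eventually_mul_sub_eq {l : Filter ℝ} [l.NeBot] {x : ℝ} {s t : ℤ}
    (hl : l ≤ 𝓝[≠] x) (h : ∀ᶠ y in l, (s : ℝ) * (y - x) = t * (y - x)) : s = t := by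
  obtain ⟨y, hy, hyx⟩ := (h.and (hl self_mem_nhdsWithin)).exists
  exact_mod_cast mul_right_cancel₀ (sub_ne_zero.2 hyx) hy

lemma exists_affine_on_Icc_of_locally_affine {F : ℝ → ℝ} {p q : ℝ} (hpq : p < q)
    (hF : ContinuousOn F (Icc p q))
    (h : ∀ x ∈ Ioo p q, ∃ s : ℤ, ∀ᶠ y in 𝓝 x, F y = F x + s * (y - x)) :
    ∃ s : ℤ, ∀ y ∈ Icc p q, F y = F p + s * (y - p) := by
  choose! sl hsl using h
  have affine_deriv (c x₀ s x : ℝ) : HasDerivAt (fun y => c + s * (y - x₀)) s x := by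
    simpa using (((hasDerivAt_id x).sub_const x₀).const_mul s).const_add c
  have hder : ∀ x ∈ Ioo p q, HasDerivAt F (sl x) x := fun x hx =>
    (affine_deriv _ _ _ x).congr_of_eventuallyEq (hsl x hx)
  -- Points near `x` lie on the same affine piece, and derivatives are unique.
  have hloc : ∀ x ∈ Ioo p q, ∀ᶠ y in 𝓝[Ioo p q] x, sl y = sl x := by
    intro x hx
    filter_upwards [nhdsWithin_le_nhds (hsl x hx).eventually_nhds, self_mem_nhdsWithin]
      with y hy hyI
    exact_mod_cast (hder y hyI).unique ((affine_deriv _ _ _ y).congr_of_eventuallyEq hy)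
  have hconst : ∀ x ∈ Ioo p q, ∀ y ∈ Ioo p q, sl x = sl y := fun x hx y hy =>
    isPreconnected_Ioo.constant
      (fun z hz => tendsto_const_nhds.congr' <| (hloc z hz).mono fun _ h => h.symm) hx hy
  obtain ⟨c, hc⟩ : (Ioo p q).Nonempty := nonempty_Ioo.2 hpq
  refine ⟨sl c, fun y hy => ?_⟩
  rcases hy.1.eq_or_lt with rfl | hpy
  · simp
  obtain ⟨z, hz, hzs⟩ := exists_hasDerivAt_eq_slope F (fun x => (sl x : ℝ)) hpy
    (hF.mono (Icc_subset_Icc_right hy.2))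
    (fun x hx => hder x ⟨hx.1, hx.2.trans_le hy.2⟩)
  have hz' : z ∈ Ioo p q := ⟨hz.1, hz.2.trans_le hy.2⟩
  rw [hconst c hc z hz', hzs]
  field_simp [(sub_pos.2 hpy).ne']
  ring

section HasOneSidedSlopes

variable {F : ℝ → ℝ} {x : ℝ} {mp mm s : ℤ}

lemma HasOneSidedSlopes.eventually_nhds (h : HasOneSidedSlopes F x s s) :
    ∀ᶠ y in 𝓝 x, F y = F x + s * (y - x) := by
  rw [← nhdsNE_sup_pure x, ← nhdsLT_sup_nhdsGT x, eventually_sup, eventually_sup]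
  exact ⟨⟨h.2, h.1⟩, by simp⟩

lemma HasOneSidedSlopes.right_eq {q : ℝ} (h : HasOneSidedSlopes F x mp mm) (hxq : x < q)
    (hF : ∀ y ∈ Ioo x q, F y = F x + s * (y - x)) : mp = s :=
  int_eq_of_eventually_mul_sub_eq (nhdsGT_le_nhdsNE x) <| by
    filter_upwards [h.1, Ioo_mem_nhdsGT hxq] with y h₁ h₂
    linear_combination hF y h₂ - h₁

lemma HasOneSidedSlopes.left_eq {p : ℝ} (h : HasOneSidedSlopes F x mp mm) (hpx : p < x)
    (hF : ∀ y ∈ Ioo p x, F y = F x + s * (y - x)) : mm = s :=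
  int_eq_of_eventually_mul_sub_eq (nhdsLT_le_nhdsNE x) <| by
    filter_upwards [h.2, Ioo_mem_nhdsLT hpx] with y h₁ h₂
    linear_combination hF y h₂ - h₁

end HasOneSidedSlopes

/-- `s₁` and `s₂` are the slopes of `F` on the arcs `[0, ℓ]` and `[ℓ, ℓ + m]`. -/
theorem IsPLDivisor.exists_arc_slopes {ℓ m : ℝ} {F : ℝ → ℝ} {D : ℝ →₀ ℤ}
    (hl : 0 < ℓ) (hm : 0 < m) (hF : IsPLDivisor (ℓ + m) F D) (hD : ∀ x, x ≠ 0 → x ≠ ℓ → D x = 0) :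
    ∃ s₁ s₂ : ℤ, (s₁ : ℝ) * ℓ + s₂ * m = 0 ∧ D 0 = s₂ - s₁ := by
  obtain ⟨hcont, hper, -, hslopes⟩ := hF
  have hloc : ∀ x ∈ Ico 0 (ℓ + m), x ≠ 0 → x ≠ ℓ →
      ∃ s : ℤ, ∀ᶠ y in 𝓝 x, F y = F x + s * (y - x) := by
    intro x hx h0 hℓ
    obtain ⟨mp, mm, hs, hDx⟩ := hslopes x
    obtain rfl : mm = mp := by linarith [hDx hx, hD x h0 hℓ]
    exact ⟨mm, hs.eventually_nhds⟩
  obtain ⟨s₁, hs₁⟩ := exists_affine_on_Icc_of_locally_affine hl hcont.continuousOn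
    fun x hx => hloc x ⟨hx.1.le, by linarith [hx.2]⟩ hx.1.ne' hx.2.ne
  obtain ⟨s₂, hs₂⟩ := exists_affine_on_Icc_of_locally_affine (by linarith : ℓ < ℓ + m)
    hcont.continuousOn fun x hx => hloc x ⟨by linarith [hx.1], hx.2⟩ (by linarith [hx.1]) hx.1.ne'
  have hFℓ : F ℓ = F 0 + s₁ * ℓ := by simpa using hs₁ ℓ ⟨hl.le, le_rfl⟩
  have hsum : (s₁ : ℝ) * ℓ + s₂ * m = 0 := by
    have hFL : F (ℓ + m) = F 0 := by simpa using hper 0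
    linear_combination -hs₂ (ℓ + m) ⟨by linarith, le_rfl⟩ + hFL - hFℓ
  obtain ⟨mp, mm, hs, hD0⟩ := hslopes 0
  have hmp : mp = s₁ := hs.right_eq hl fun y hy => by
    simpa using hs₁ y ⟨hy.1.le, hy.2.le⟩
  -- Left of `0` the loop continues with the end of the second arc.
  have hmm : mm = s₂ := hs.left_eq (neg_lt_zero.2 hm) fun y hy => by
    linear_combination hs₂ (y + (ℓ + m)) ⟨by linarith [hy.1], by linarith [hy.2]⟩
      - hper y + hFℓ + hsum
  refine ⟨s₁, s₂, hsum, ?_⟩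
  rw [hD0 ⟨le_rfl, by linarith⟩, hmm, hmp]

/-- On a metric loop with two points `P = 0` and `Q = ℓ` dividing it into arcs
of lengths `ℓ` and `m` with irrational ratio (general position), the divisors
`aP + (d-a)Q` and `bP + (d-b)Q` are not linearly equivalent for `a ≠ b`. -/
theorem loop_general_inequivalent (ℓ m : ℝ) (hl : 0 < ℓ) (hm : 0 < m)
    (hirr : Irrational (ℓ / m)) (d a b : ℤ) (hab : a ≠ b) :
    ¬ LoopEquiv (ℓ + m)
        (Finsupp.single (0 : ℝ) a + Finsupp.single ℓ (d - a))
        (Finsupp.single (0 : ℝ) b + Finsupp.single ℓ (d - b)) := by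
  rintro ⟨F, hF⟩
  obtain ⟨s₁, s₂, hsum, hD0⟩ := hF.exists_arc_slopes hl hm fun x h0 hℓ => by
    simp [Ne.symm h0, Ne.symm hℓ]
  obtain ⟨rfl, rfl⟩ := hirr.eq_zero_of_int_mul_add_int_mul_eq_zero hsum
  have hD0' : a - b = 0 := by simpa [Finsupp.single_apply, hl.ne'] using hD0
  exact hab (sub_eq_zero.1 hD0')
end

section
/- In the tropical combinatorial model on a chain of g loops (each loop i contributes either ε_i = 0, or ε_i = 1 with x_i generic, or ε_i = 1 with x_i being t(i)-special), with initial vanishing (u_0(0),…,u_r(0)) = (u, u−1,…,u−r), d = u + Σε_i, and final vanishing u_t(g) ≥ r − t, the number α of loops with ε_i = 1 and x_i generic satisfies α ≤ ρ = g − (r+1)(g−d+r). -/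
/-!
Track the weight `W(i) = ∑_{s ≤ r} u_s(i)`. By the transition rules it drops by at least `r` across
a loop with `ε_i = 0`, rises by at most `1` across a special loop (the rule that raises `u_{t₀}`
applies only when there is a gap to fill, and strict decrease of `s ↦ u_s` rules out the rest), and
is unchanged across a generic loop. Between `W(0) = ∑ (u - s)` and `W(g) ≥ ∑ (r - s)` the total drop
is thus at most `(r + 1)(u - r)`, while it is at least `r · #{ε_i = 0} - #{special loops}`;
rearranging this gives `α ≤ ρ`.
-/

def vanishingWeight (r : ℕ) (v : ℕ → ℤ) : ℤ := ∑ s ∈ Finset.range (r + 1), v s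

/-- The transition rules (a)–(e) across one loop, from the vanishing orders `v` before the loop to
`w` after it; `e`, `sp` and `t₀` stand for `ε_i`, specialness of `x_i` and `t(i)`. -/
def IsLoopTransition (r : ℕ) (e sp : Bool) (t₀ : ℕ) (v w : ℕ → ℤ) : Prop :=
  (e = false → 0 < v r → ∀ s ≤ r, w s = v s - 1) ∧
  (e = false → v r = 0 → (∀ s < r, w s = v s - 1) ∧ w r = v r) ∧
  (e = true → sp = true → t₀ ≤ r ∧
    ((t₀ = 0 ∨ v t₀ + 1 < v (t₀ - 1)) → w t₀ = v t₀ + 1 ∧ ∀ s ≤ r, s ≠ t₀ → w s = v s) ∧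
    ((0 < t₀ ∧ v t₀ + 1 = v (t₀ - 1)) → ∀ s ≤ r, w s = v s)) ∧
  (e = true → sp = false → ∀ s ≤ r, w s = v s)

def minWeightDrop (r : ℕ) : Bool → Bool → ℤ
  | false, _ => r
  | true, true => -1
  | true, false => 0

section

variable {r : ℕ}

section VanishingWeight

variable {v w : ℕ → ℤ}

lemma vanishingWeight_congr (h : ∀ s ≤ r, w s = v s) : vanishingWeight r w = vanishingWeight r v :=
  Finset.sum_congr rfl fun s hs => h s (Nat.lt_succ_iff.mp (Finset.mem_range.mp hs))

lemma vanishingWeight_mono (h : ∀ s ≤ r, v s ≤ w s) : vanishingWeight r v ≤ vanishingWeight r w :=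
  Finset.sum_le_sum fun s hs => h s (Nat.lt_succ_iff.mp (Finset.mem_range.mp hs))

lemma vanishingWeight_const_sub (a b : ℤ) :
    vanishingWeight r (fun s => a - s)
      = vanishingWeight r (fun s => b - s) + (r + 1) * (a - b) := by
  simp only [vanishingWeight, Finset.sum_sub_distrib, Finset.sum_const, Finset.card_range,
    nsmul_eq_mul]
  push_cast
  ring

lemma vanishingWeight_of_forall_eq_sub_one (h : ∀ s ≤ r, w s = v s - 1) :
    vanishingWeight r w = vanishingWeight r v - (r + 1) := by
  rw [vanishingWeight_congr h]
  simp only [vanishingWeight, Finset.sum_sub_distrib, Finset.sum_const, Finset.card_range,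
    nsmul_eq_mul]
  push_cast
  ring

lemma vanishingWeight_of_forall_lt_eq_sub_one (h : ∀ s < r, w s = v s - 1) (hr : w r = v r) :
    vanishingWeight r w = vanishingWeight r v - r := by
  simp only [vanishingWeight, Finset.sum_range_succ, hr,
    Finset.sum_congr rfl fun s hs => h s (Finset.mem_range.mp hs), Finset.sum_sub_distrib,
    Finset.sum_const, Finset.card_range, nsmul_eq_mul, mul_one]
  ring

lemma vanishingWeight_of_eq_add_one {t₀ : ℕ} (ht : t₀ ≤ r) (hup : w t₀ = v t₀ + 1)
    (hrest : ∀ s ≤ r, s ≠ t₀ → w s = v s) : vanishingWeight r w = vanishingWeight r v + 1 := by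
  have hmem : t₀ ∈ Finset.range (r + 1) := Finset.mem_range.mpr (Nat.lt_succ_of_le ht)
  have herase : ∑ s ∈ (Finset.range (r + 1)).erase t₀, w s
      = ∑ s ∈ (Finset.range (r + 1)).erase t₀, v s :=
    Finset.sum_congr rfl fun s hs =>
      hrest s (Nat.lt_succ_iff.mp (Finset.mem_range.mp (Finset.mem_of_mem_erase hs)))
        (Finset.ne_of_mem_erase hs)
  rw [vanishingWeight, vanishingWeight, ← Finset.sum_erase_add _ _ hmem,
    ← Finset.sum_erase_add _ v hmem, herase, hup]
  ring

end VanishingWeight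

namespace IsLoopTransition

variable {e sp : Bool} {t₀ : ℕ} {v w : ℕ → ℤ}

lemma vanishingWeight_le_of_eps_false (hT : IsLoopTransition r false sp t₀ v w) (hv : 0 ≤ v r) :
    vanishingWeight r w ≤ vanishingWeight r v - r := by
  rcases hv.lt_or_eq with hpos | hzero
  · have := vanishingWeight_of_forall_eq_sub_one (hT.1 rfl hpos)
    linarith
  · obtain ⟨hlt, hr⟩ := hT.2.1 rfl hzero.symm
    exact (vanishingWeight_of_forall_lt_eq_sub_one hlt hr).le

lemma vanishingWeight_le_of_special (hT : IsLoopTransition r true true t₀ v w)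
    (hdec : ∀ s < r, v (s + 1) < v s) : vanishingWeight r w ≤ vanishingWeight r v + 1 := by
  obtain ⟨ht, hgap, hnogap⟩ := hT.2.2.1 rfl rfl
  by_cases h : t₀ = 0 ∨ v t₀ + 1 < v (t₀ - 1)
  · obtain ⟨hup, hrest⟩ := hgap h
    exact (vanishingWeight_of_eq_add_one ht hup hrest).le
  · obtain ⟨ht₀, hle⟩ := not_or.mp h
    have hlt : v t₀ < v (t₀ - 1) := by
      simpa [Nat.sub_add_cancel (Nat.pos_of_ne_zero ht₀)] using hdec (t₀ - 1) (by omega)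
    have := vanishingWeight_congr (hnogap ⟨Nat.pos_of_ne_zero ht₀, by omega⟩)
    linarith

lemma vanishingWeight_le_sub_minWeightDrop (hT : IsLoopTransition r e sp t₀ v w)
    (hdec : ∀ s < r, v (s + 1) < v s) (hv : 0 ≤ v r) :
    vanishingWeight r w ≤ vanishingWeight r v - minWeightDrop r e sp := by
  cases e <;> cases sp
  · exact hT.vanishingWeight_le_of_eps_false hv
  · exact hT.vanishingWeight_le_of_eps_false hv
  · simp [minWeightDrop, vanishingWeight_congr (hT.2.2.2 rfl rfl)]
  · simpa [minWeightDrop, sub_neg_eq_add] using hT.vanishingWeight_le_of_special hdec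

end IsLoopTransition

lemma le_sub_sum_Icc_of_le_sub {α : Type*} [AddCommGroup α] [PartialOrder α]
    [IsOrderedAddMonoid α] {f c : ℕ → α} {n : ℕ}
    (h : ∀ i, 1 ≤ i → i ≤ n → f i ≤ f (i - 1) - c i) :
    f n ≤ f 0 - ∑ i ∈ Finset.Icc 1 n, c i := by
  induction n with
  | zero => simp
  | succ n ih =>
    rw [Finset.sum_Icc_succ_top (Nat.le_add_left 1 n), sub_add_eq_sub_sub]
    exact (h (n + 1) (Nat.le_add_left 1 n) le_rfl).trans
      (sub_le_sub_right (ih fun i h1 h2 => h i h1 (Nat.le_succ_of_le h2)) _)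

lemma sum_minWeightDrop {ι : Type*} (S : Finset ι) (e sp : ι → Bool) :
    ∑ i ∈ S, minWeightDrop r (e i) (sp i)
      = ((S.filter fun i => e i = true ∧ sp i = false).card : ℤ) - S.card
        + (r + 1) * (S.card - (S.filter fun i => e i = true).card) := by
  rw [Finset.natCast_card_filter, Finset.natCast_card_filter, Finset.card_eq_sum_ones,
    Nat.cast_sum, Nat.cast_one, ← Finset.sum_sub_distrib, ← Finset.sum_sub_distrib,
    Finset.mul_sum, ← Finset.sum_add_distrib]
  refine Finset.sum_congr rfl fun i _ => ?_
  cases e i <;> cases sp i <;> simp [minWeightDrop]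

end

theorem tropical_generic_loops_le_rho_general (g d r : ℕ) (uu : ℕ)
    (eps spec : ℕ → Bool) (t : ℕ → ℕ)
    (u : ℕ → ℕ → ℤ)
    (hinit : ∀ s ≤ r, u 0 s = (uu : ℤ) - s)
    (hd : (d : ℤ) = (uu : ℤ) + (((Finset.Icc 1 g).filter fun i => eps i = true).card : ℤ))
    (hdec : ∀ i ≤ g, ∀ s < r, u i (s + 1) < u i s)
    (hnonneg : ∀ i ≤ g, 0 ≤ u i r)
    (hfinal : ∀ s ≤ r, (r : ℤ) - s ≤ u g s)
    (hstep : ∀ i, 1 ≤ i → i ≤ g →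
      -- (a) `ε_i = 0` and `u_r(i-1) > 0`: all orders drop by 1
      (eps i = false → 0 < u (i - 1) r → ∀ s ≤ r, u i s = u (i - 1) s - 1) ∧
      -- (b) `ε_i = 0` and `u_r(i-1) = 0`: all drop by 1 except `u_r` stays
      (eps i = false → u (i - 1) r = 0 →
        (∀ s < r, u i s = u (i - 1) s - 1) ∧ u i r = u (i - 1) r) ∧
      -- `x_i` is `t(i)`-special
      (eps i = true → spec i = true → t i ≤ r ∧
        -- (d) special with a strict gap: `u_{t(i)}` increases by 1, others stay
        ((t i = 0 ∨ u (i - 1) (t i) + 1 < u (i - 1) (t i - 1)) →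
          u i (t i) = u (i - 1) (t i) + 1 ∧ ∀ s ≤ r, s ≠ t i → u i s = u (i - 1) s) ∧
        -- (c) special with `u_{t(i)}(i-1)+1 = u_{t(i)-1}(i-1)`: all stay
        ((0 < t i ∧ u (i - 1) (t i) + 1 = u (i - 1) (t i - 1)) →
          ∀ s ≤ r, u i s = u (i - 1) s)) ∧
      -- (e) `ε_i = 1` with `x_i` generic: all stay
      (eps i = true → spec i = false → ∀ s ≤ r, u i s = u (i - 1) s)) :
    ((((Finset.Icc 1 g).filter fun i => eps i = true ∧ spec i = false).card : ℤ))
      ≤ (g : ℤ) - (r + 1) * ((g : ℤ) - d + r) := by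
  have hW := le_sub_sum_Icc_of_le_sub (f := fun i => vanishingWeight r (u i))
    (c := fun i => minWeightDrop r (eps i) (spec i)) fun i h1 h2 =>
      IsLoopTransition.vanishingWeight_le_sub_minWeightDrop (hstep i h1 h2)
        (hdec (i - 1) (by omega)) (hnonneg (i - 1) (by omega))
  have hW₀ : vanishingWeight r (u 0)
      = vanishingWeight r (fun s => (r : ℤ) - s) + (r + 1) * (uu - r) := by
    rw [vanishingWeight_congr hinit, vanishingWeight_const_sub]
  have hW_g : vanishingWeight r (fun s => (r : ℤ) - s) ≤ vanishingWeight r (u g) :=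
    vanishingWeight_mono hfinal
  have hdrop := sum_minWeightDrop (r := r) (Finset.Icc 1 g) eps spec
  rw [Nat.card_Icc, Nat.add_sub_cancel] at hdrop
  rw [hd]
  linear_combination hW + hW_g + hW₀ - hdrop

/-- The tropical dimension bound on a chain of `g` loops.  Each loop `i`
contributes `ε_i = 0`, or `ε_i = 1` with `x_i` generic, or `ε_i = 1` with
`x_i` being `t(i)`-special; the vanishing orders evolve by the transition
rules of Corollary `sumanul`.  With initial vanishing
`(u_0(0), …, u_r(0)) = (u, u-1, …, u-r)`, `d = u + Σ ε_i`, and final vanishing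
`u_t(g) ≥ r - t`, the number `α` of loops with `ε_i = 1` and `x_i` generic
satisfies `α ≤ ρ = g - (r+1)(g-d+r)`. -/
theorem tropical_generic_loops_le_rho (g d r : ℕ) (uu : ℕ) (hur : r ≤ uu)
    (eps spec : ℕ → Bool) (t : ℕ → ℕ)
    (u : ℕ → ℕ → ℤ)
    (hinit : ∀ s ≤ r, u 0 s = (uu : ℤ) - s)
    (hd : (d : ℤ) = (uu : ℤ) + (((Finset.Icc 1 g).filter fun i => eps i = true).card : ℤ))
    (hdec : ∀ i ≤ g, ∀ s < r, u i (s + 1) < u i s)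
    (hnonneg : ∀ i ≤ g, 0 ≤ u i r)
    (hfinal : ∀ s ≤ r, (r : ℤ) - s ≤ u g s)
    (hstep : ∀ i, 1 ≤ i → i ≤ g →
      -- (a) `ε_i = 0` and `u_r(i-1) > 0`: all orders drop by 1
      (eps i = false → 0 < u (i - 1) r → ∀ s ≤ r, u i s = u (i - 1) s - 1) ∧
      -- (b) `ε_i = 0` and `u_r(i-1) = 0`: all drop by 1 except `u_r` stays
      (eps i = false → u (i - 1) r = 0 →
        (∀ s < r, u i s = u (i - 1) s - 1) ∧ u i r = u (i - 1) r) ∧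
      -- `x_i` is `t(i)`-special
      (eps i = true → spec i = true → t i ≤ r ∧
        -- (d) special with a strict gap: `u_{t(i)}` increases by 1, others stay
        ((t i = 0 ∨ u (i - 1) (t i) + 1 < u (i - 1) (t i - 1)) →
          u i (t i) = u (i - 1) (t i) + 1 ∧ ∀ s ≤ r, s ≠ t i → u i s = u (i - 1) s) ∧
        -- (c) special with `u_{t(i)}(i-1)+1 = u_{t(i)-1}(i-1)`: all stay
        ((0 < t i ∧ u (i - 1) (t i) + 1 = u (i - 1) (t i - 1)) →
          ∀ s ≤ r, u i s = u (i - 1) s)) ∧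
      -- (e) `ε_i = 1` with `x_i` generic: all stay
      (eps i = true → spec i = false → ∀ s ≤ r, u i s = u (i - 1) s)) :
    ((((Finset.Icc 1 g).filter fun i => eps i = true ∧ spec i = false).card : ℤ))
      ≤ (g : ℤ) - (r + 1) * ((g : ℤ) - d + r) :=
  tropical_generic_loops_le_rho_general g d r uu eps spec t u hinit hd hdec hnonneg hfinal hstep
end
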